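/- Let A be an n×n real symmetric positive definite matrix, let P be an n×n_C real matrix, R := Pᵀ, and let A_C be an invertible symmetric n_C×n_C real matrix. Assume ‖P·A_C^{-1}·R·A‖₂ ≤ C_A and that C̲_p^{-1}·‖x‖₂ ≤ ‖P x‖₂ ≤ C̄_p·‖x‖₂ for all x ∈ ℝ^{n_C}. Let V be an (n_C)²×(n_C)² real matrix with ‖V‖₂ ≤ ε. Then ‖ A^{⊗2} · (P·A_C^{-1})^{⊗2} · V · (R·A)^{⊗2} · (A^{-1})^{⊗2} ‖₂ ≤ ε · C̲_p² · C̄_p² · C_A². (This is the bound on the restriction-fault covariance term C^{(R)} in the double energy norm ‖M‖_{A²} := ‖A^{⊗2} M (A^{-1})^{⊗2}‖₂ used in the analysis of the Fault-Prone Two Grid Method with protected prolongation.) -/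

import Mathlib

open Matrix
open scoped Kronecker

/-- The spectral norm (ℓ²-operator norm) of a real matrix. -/
noncomputable def spec2Norm {m n : Type*} [Fintype m] [Fintype n] [DecidableEq n]
    (M : Matrix m n ℝ) : ℝ :=
  ‖LinearMap.toContinuousLinearMap (Matrix.toEuclideanLin M)‖

/-- The Euclidean norm of a real vector. -/
noncomputable def euclNorm {n : Type*} [Fintype n] (v : n → ℝ) : ℝ :=
  Real.sqrt (∑ j, (v j) ^ 2)

lemma euclNorm_eq_norm {n : Type*} [Fintype n] (v : n → ℝ) :
    euclNorm v = ‖(WithLp.equiv 2 (n → ℝ)).symm v‖ := by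
  rw [EuclideanSpace.norm_eq, euclNorm]
  congr 1
  refine Finset.sum_congr rfl fun i _ => ?_
  show v i ^ 2 = ‖v i‖ ^ 2
  rw [Real.norm_eq_abs, sq_abs]

lemma spec2Norm_nonneg {m n : Type*} [Fintype m] [Fintype n] [DecidableEq n]
    (M : Matrix m n ℝ) : 0 ≤ spec2Norm M := norm_nonneg _

lemma euclNorm_nonneg {n : Type*} [Fintype n] (v : n → ℝ) : 0 ≤ euclNorm v :=
  Real.sqrt_nonneg _

lemma mulVec_euclNorm_le {m n : Type*} [Fintype m] [Fintype n] [DecidableEq n]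
    (M : Matrix m n ℝ) (x : n → ℝ) :
    euclNorm (M.mulVec x) ≤ spec2Norm M * euclNorm x := by
  have h := (LinearMap.toContinuousLinearMap (Matrix.toEuclideanLin M)).le_opNorm
    ((WithLp.equiv 2 (n → ℝ)).symm x)
  rw [euclNorm_eq_norm, euclNorm_eq_norm]
  simpa [spec2Norm, Matrix.toEuclideanLin_toLp, Matrix.toLin'_apply] using h

lemma spec2Norm_le_of {m n : Type*} [Fintype m] [Fintype n] [DecidableEq n]
    (M : Matrix m n ℝ) {c : ℝ} (hc : 0 ≤ c)
    (h : ∀ x : n → ℝ, euclNorm (M.mulVec x) ≤ c * euclNorm x) :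
    spec2Norm M ≤ c := by
  apply ContinuousLinearMap.opNorm_le_bound _ hc
  intro v
  have h2 := h ((WithLp.equiv 2 (n → ℝ)) v)
  rw [euclNorm_eq_norm, euclNorm_eq_norm] at h2
  simpa [Matrix.toEuclideanLin_apply, Matrix.toLin'_apply] using h2

lemma spec2Norm_mul_le {l m n : Type*} [Fintype l] [Fintype m] [Fintype n]
    [DecidableEq m] [DecidableEq n]
    (M : Matrix l m ℝ) (N : Matrix m n ℝ) :
    spec2Norm (M * N) ≤ spec2Norm M * spec2Norm N := by
  apply spec2Norm_le_of _ (mul_nonneg (spec2Norm_nonneg M) (spec2Norm_nonneg N))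
  intro x
  rw [← Matrix.mulVec_mulVec]
  calc euclNorm (M.mulVec (N.mulVec x)) ≤ spec2Norm M * euclNorm (N.mulVec x) :=
        mulVec_euclNorm_le M _
    _ ≤ spec2Norm M * (spec2Norm N * euclNorm x) :=
        mul_le_mul_of_nonneg_left (mulVec_euclNorm_le N x) (spec2Norm_nonneg M)
    _ = spec2Norm M * spec2Norm N * euclNorm x := by ring

lemma spec2Norm_transpose {m n : Type*} [Fintype m] [Fintype n] [DecidableEq m]
    [DecidableEq n] (M : Matrix m n ℝ) : spec2Norm Mᵀ = spec2Norm M := by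
  have h : (Mᵀ : Matrix n m ℝ) = Mᴴ := by
    ext i j; simp [Matrix.conjTranspose_apply]
  rw [spec2Norm, h, Matrix.toEuclideanLin_conjTranspose_eq_adjoint]
  rw [spec2Norm, LinearMap.adjoint_toContinuousLinearMap]
  exact LinearIsometryEquiv.norm_map ContinuousLinearMap.adjoint _

lemma sq_euclNorm {n : Type*} [Fintype n] (v : n → ℝ) :
    euclNorm v ^ 2 = ∑ j, (v j) ^ 2 :=
  Real.sq_sqrt (Finset.sum_nonneg fun _ _ => sq_nonneg _)

lemma spec2Norm_kron_one_right {m n p : Type*} [Fintype m] [Fintype n] [Fintype p]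
    [DecidableEq n] [DecidableEq p] (M : Matrix m n ℝ) :
    spec2Norm (M ⊗ₖ (1 : Matrix p p ℝ)) ≤ spec2Norm M := by
  apply spec2Norm_le_of _ (spec2Norm_nonneg M)
  intro x
  set c := spec2Norm M with hc
  have hentry : ∀ i : m, ∀ q : p,
      (M ⊗ₖ (1 : Matrix p p ℝ)).mulVec x (i, q) = M.mulVec (fun j => x (j, q)) i := by
    intro i q
    simp only [Matrix.mulVec, dotProduct, Fintype.sum_prod_type,
      Matrix.kroneckerMap_apply, Matrix.one_apply, mul_ite, mul_one, mul_zero,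
      ite_mul, zero_mul, Finset.sum_ite_eq, Finset.mem_univ, if_true]
  have hsq : euclNorm ((M ⊗ₖ (1 : Matrix p p ℝ)).mulVec x) ^ 2
      = ∑ q : p, euclNorm (M.mulVec (fun j => x (j, q))) ^ 2 := by
    simp only [sq_euclNorm]
    rw [Fintype.sum_prod_type, Finset.sum_comm]
    refine Finset.sum_congr rfl fun q _ => Finset.sum_congr rfl fun i _ => ?_
    rw [hentry]
  have hx : euclNorm x ^ 2 = ∑ q : p, euclNorm (fun j => x (j, q)) ^ 2 := by
    simp only [sq_euclNorm]
    rw [Fintype.sum_prod_type, Finset.sum_comm]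
  have hfin : euclNorm ((M ⊗ₖ (1 : Matrix p p ℝ)).mulVec x) ^ 2
      ≤ (c * euclNorm x) ^ 2 := by
    rw [hsq, mul_pow, hx, Finset.mul_sum]
    refine Finset.sum_le_sum fun q _ => ?_
    rw [← mul_pow]
    exact pow_le_pow_left₀ (euclNorm_nonneg _) (mulVec_euclNorm_le M _) 2
  exact le_of_pow_le_pow_left₀ two_ne_zero
    (mul_nonneg (spec2Norm_nonneg M) (euclNorm_nonneg x)) hfin

lemma spec2Norm_one_kron_left {m n p : Type*} [Fintype m] [Fintype n] [Fintype p]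
    [DecidableEq n] [DecidableEq p] (N : Matrix m n ℝ) :
    spec2Norm ((1 : Matrix p p ℝ) ⊗ₖ N) ≤ spec2Norm N := by
  apply spec2Norm_le_of _ (spec2Norm_nonneg N)
  intro x
  set c := spec2Norm N with hc
  have hentry : ∀ i : p, ∀ q : m,
      ((1 : Matrix p p ℝ) ⊗ₖ N).mulVec x (i, q) = N.mulVec (fun j => x (i, j)) q := by
    intro i q
    simp only [Matrix.mulVec, dotProduct, Fintype.sum_prod_type,
      Matrix.kroneckerMap_apply, Matrix.one_apply, mul_ite, mul_one, mul_zero,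
      ite_mul, zero_mul, one_mul]
    rw [Finset.sum_comm]
    simp [Finset.sum_ite_eq, Finset.sum_ite_eq']
  have hsq : euclNorm (((1 : Matrix p p ℝ) ⊗ₖ N).mulVec x) ^ 2
      = ∑ i : p, euclNorm (N.mulVec (fun j => x (i, j))) ^ 2 := by
    simp only [sq_euclNorm]
    rw [Fintype.sum_prod_type]
    refine Finset.sum_congr rfl fun i _ => Finset.sum_congr rfl fun q _ => ?_
    rw [hentry]
  have hx : euclNorm x ^ 2 = ∑ i : p, euclNorm (fun j => x (i, j)) ^ 2 := by
    simp only [sq_euclNorm]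
    rw [Fintype.sum_prod_type]
  have hfin : euclNorm (((1 : Matrix p p ℝ) ⊗ₖ N).mulVec x) ^ 2
      ≤ (c * euclNorm x) ^ 2 := by
    rw [hsq, mul_pow, hx, Finset.mul_sum]
    refine Finset.sum_le_sum fun i _ => ?_
    rw [← mul_pow]
    exact pow_le_pow_left₀ (euclNorm_nonneg _) (mulVec_euclNorm_le N _) 2
  exact le_of_pow_le_pow_left₀ two_ne_zero
    (mul_nonneg (spec2Norm_nonneg N) (euclNorm_nonneg x)) hfin

lemma spec2Norm_kron_le {m n m' n' : Type*} [Fintype m] [Fintype n] [Fintype m']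
    [Fintype n'] [DecidableEq n] [DecidableEq n'] [DecidableEq m']
    (M : Matrix m n ℝ) (N : Matrix m' n' ℝ) :
    spec2Norm (M ⊗ₖ N) ≤ spec2Norm M * spec2Norm N := by
  have hdecomp : M ⊗ₖ N = (M ⊗ₖ (1 : Matrix m' m' ℝ)) * ((1 : Matrix n n ℝ) ⊗ₖ N) := by
    rw [← Matrix.mul_kronecker_mul, Matrix.mul_one, Matrix.one_mul]
  rw [hdecomp]
  calc spec2Norm ((M ⊗ₖ (1 : Matrix m' m' ℝ)) * ((1 : Matrix n n ℝ) ⊗ₖ N))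
      ≤ spec2Norm (M ⊗ₖ (1 : Matrix m' m' ℝ)) * spec2Norm ((1 : Matrix n n ℝ) ⊗ₖ N) :=
        spec2Norm_mul_le _ _
    _ ≤ spec2Norm M * spec2Norm N :=
        mul_le_mul (spec2Norm_kron_one_right M) (spec2Norm_one_kron_left N)
          (spec2Norm_nonneg _) (spec2Norm_nonneg M)

/-- Bound on the restriction-fault covariance term `C^{(R)}` in the double energy
norm `‖M‖_{A²} = ‖A^{⊗2} M (A⁻¹)^{⊗2}‖₂`: with `A` SPD, `R = Pᵀ`, `A_C` symmetric
and invertible, `‖P·A_C⁻¹·R·A‖₂ ≤ C_A`, `C̲_p⁻¹‖x‖₂ ≤ ‖Px‖₂ ≤ C̄_p‖x‖₂` and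
`‖V‖₂ ≤ ε`, one has
`‖A^{⊗2}(P·A_C⁻¹)^{⊗2} V (R·A)^{⊗2}(A⁻¹)^{⊗2}‖₂ ≤ ε·C̲_p²·C̄_p²·C_A²`. -/
theorem restriction_fault_double_energy_bound
    (n nC : ℕ)
    (A : Matrix (Fin n) (Fin n) ℝ) (hA : A.PosDef)
    (P : Matrix (Fin n) (Fin nC) ℝ)
    (AC : Matrix (Fin nC) (Fin nC) ℝ) (hACsymm : ACᵀ = AC) (hACinv : IsUnit AC.det)
    (CA ε uCp oCp : ℝ) (huCp : 0 < uCp) (hoCp : 0 < oCp)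
    (hCA : spec2Norm (P * AC⁻¹ * Pᵀ * A) ≤ CA)
    (hPlow : ∀ x : Fin nC → ℝ, uCp⁻¹ * euclNorm x ≤ euclNorm (P.mulVec x))
    (hPhigh : ∀ x : Fin nC → ℝ, euclNorm (P.mulVec x) ≤ oCp * euclNorm x)
    (V : Matrix (Fin nC × Fin nC) (Fin nC × Fin nC) ℝ)
    (hV : spec2Norm V ≤ ε) :
    spec2Norm ((A ⊗ₖ A) * ((P * AC⁻¹) ⊗ₖ (P * AC⁻¹)) * V *
        ((Pᵀ * A) ⊗ₖ (Pᵀ * A)) * (A⁻¹ ⊗ₖ A⁻¹))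
      ≤ ε * uCp ^ 2 * oCp ^ 2 * CA ^ 2 := by
  have hCA0 : 0 ≤ CA := le_trans (spec2Norm_nonneg _) hCA
  have hε0 : 0 ≤ ε := le_trans (spec2Norm_nonneg V) hV
  have hAunit : IsUnit A.det := isUnit_iff_ne_zero.mpr hA.det_pos.ne'
  have hAAinv : A * A⁻¹ = 1 := Matrix.mul_nonsing_inv A hAunit
  have hAsymm : Aᵀ = A := by
    have := hA.isHermitian
    simpa [Matrix.IsHermitian, Matrix.conjTranspose_eq_transpose_of_trivial] using this
  set L := P * AC⁻¹ with hL_def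
  -- bound on AC⁻¹ * Pᵀ * A
  have hmid : spec2Norm (AC⁻¹ * Pᵀ * A) ≤ uCp * CA := by
    apply spec2Norm_le_of _ (mul_nonneg huCp.le hCA0)
    intro x
    have h2 : P.mulVec ((AC⁻¹ * Pᵀ * A).mulVec x) = (P * AC⁻¹ * Pᵀ * A).mulVec x := by
      rw [Matrix.mulVec_mulVec]
      simp only [Matrix.mul_assoc]
    have h1 := hPlow ((AC⁻¹ * Pᵀ * A).mulVec x)
    rw [h2] at h1
    have h1' : euclNorm ((AC⁻¹ * Pᵀ * A).mulVec x)
        ≤ uCp * euclNorm ((P * AC⁻¹ * Pᵀ * A).mulVec x) := by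
      rw [← inv_mul_le_iff₀ huCp] at *
      · linarith
    calc euclNorm ((AC⁻¹ * Pᵀ * A).mulVec x)
        ≤ uCp * euclNorm ((P * AC⁻¹ * Pᵀ * A).mulVec x) := h1'
      _ ≤ uCp * (spec2Norm (P * AC⁻¹ * Pᵀ * A) * euclNorm x) :=
          mul_le_mul_of_nonneg_left (mulVec_euclNorm_le _ _) huCp.le
      _ ≤ uCp * (CA * euclNorm x) :=
          mul_le_mul_of_nonneg_left
            (mul_le_mul_of_nonneg_right hCA (euclNorm_nonneg _)) huCp.le
      _ = uCp * CA * euclNorm x := by ring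
  have hALbound : spec2Norm (A * L) ≤ uCp * CA := by
    rw [← spec2Norm_transpose]
    have ht : (A * L)ᵀ = AC⁻¹ * Pᵀ * A := by
      rw [hL_def, Matrix.transpose_mul, Matrix.transpose_mul,
        Matrix.transpose_nonsing_inv, hACsymm, hAsymm, Matrix.mul_assoc]
    rw [ht]
    exact hmid
  have hPt : spec2Norm Pᵀ ≤ oCp := by
    rw [spec2Norm_transpose]
    exact spec2Norm_le_of _ hoCp.le hPhigh
  -- regroup the expression
  have e1 : (A ⊗ₖ A) * (L ⊗ₖ L) = (A * L) ⊗ₖ (A * L) :=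
    (Matrix.mul_kronecker_mul _ _ _ _).symm
  have e2 : ((Pᵀ * A) ⊗ₖ (Pᵀ * A)) * (A⁻¹ ⊗ₖ A⁻¹) = Pᵀ ⊗ₖ Pᵀ := by
    rw [← Matrix.mul_kronecker_mul, Matrix.mul_assoc, hAAinv, Matrix.mul_one]
  rw [e1, Matrix.mul_assoc (((A * L) ⊗ₖ (A * L)) * V), e2]
  have hK : spec2Norm ((A * L) ⊗ₖ (A * L)) ≤ (uCp * CA) ^ 2 := by
    refine (spec2Norm_kron_le _ _).trans ?_
    rw [sq]
    exact mul_le_mul hALbound hALbound (spec2Norm_nonneg _) (mul_nonneg huCp.le hCA0)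
  have hPP : spec2Norm (Pᵀ ⊗ₖ Pᵀ) ≤ oCp ^ 2 := by
    refine (spec2Norm_kron_le _ _).trans ?_
    rw [sq]
    exact mul_le_mul hPt hPt (spec2Norm_nonneg _) hoCp.le
  calc spec2Norm (((A * L) ⊗ₖ (A * L)) * V * (Pᵀ ⊗ₖ Pᵀ))
      ≤ spec2Norm (((A * L) ⊗ₖ (A * L)) * V) * spec2Norm (Pᵀ ⊗ₖ Pᵀ) :=
        spec2Norm_mul_le _ _
    _ ≤ (spec2Norm ((A * L) ⊗ₖ (A * L)) * spec2Norm V) * spec2Norm (Pᵀ ⊗ₖ Pᵀ) :=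
        mul_le_mul_of_nonneg_right (spec2Norm_mul_le _ _) (spec2Norm_nonneg _)
    _ ≤ ((uCp * CA) ^ 2 * ε) * oCp ^ 2 := by
        refine mul_le_mul (mul_le_mul hK hV (spec2Norm_nonneg _) (by positivity))
          hPP (spec2Norm_nonneg _) (by positivity)
    _ = ε * uCp ^ 2 * oCp ^ 2 * CA ^ 2 := by ring
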